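/- Define the iterative effective-angle procedure on a finite multiset of positive angles α₀,…,α_{N−1} (all < π): at each step k, let a_k be the current list of effective angles (initialized to α_i), set c_k = sin(min(π, min of a_k)/2), and if the minimum is attained at index j with current value < π, replace a_k(j) by a_k(j) + 2α_j. Then: (i) for a regular N-gon (all angles equal to α = π(1 − 2/N)), the procedure yields c_k = sin(α/2) for 0 ≤ k ≤ N−1 and c_k = 1 for all k ≥ N; (ii) in general, the procedure terminates: there exists K such that c_k = 1 for all k ≥ K. -/
import Mathlib


/-- One step of the effective-angle procedure: if some effective angle is minimal
and still below `π`, increment it by twice the corresponding original angle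
(among tied minima, choose one with the largest increment). -/
noncomputable def nextAngles (N : ℕ) (α a : Fin N → ℝ) : Fin N → ℝ :=
  if h : ∃ j, (∀ i, a j ≤ a i) ∧ a j < Real.pi ∧
      (∀ i, (∀ i', a i ≤ a i') → α i ≤ α j) then
    Function.update a h.choose (a h.choose + 2 * α h.choose)
  else a

/-- The sequence of effective-angle configurations, starting from the original angles. -/
noncomputable def angleSeq (N : ℕ) (α : Fin N → ℝ) : ℕ → (Fin N → ℝ)
  | 0 => α
  | k + 1 => nextAngles N α (angleSeq N α k)

/-- The `k`-th coefficient `c_k = sin(min(π, min of current effective angles)/2)`. -/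
noncomputable def coeffSeq (N : ℕ) (hN : 0 < N) (α : Fin N → ℝ) (k : ℕ) : ℝ :=
  Real.sin (min Real.pi
    (Finset.univ.inf'
      (Finset.univ_nonempty_iff.mpr (Fin.pos_iff_nonempty.mp hN)) (angleSeq N α k)) / 2)

namespace EAP

variable {N : ℕ}

lemma cond_of (α a : Fin N → ℝ) (h : ∃ i, a i < Real.pi) :
    ∃ j, (∀ i, a j ≤ a i) ∧ a j < Real.pi ∧
      (∀ i, (∀ i', a i ≤ a i') → α i ≤ α j) := by
  classical
  obtain ⟨i₀, hi₀⟩ := h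
  obtain ⟨j₀, -, hj₀⟩ := Finset.exists_min_image Finset.univ a ⟨i₀, Finset.mem_univ i₀⟩
  have hj₀' : ∀ i, a j₀ ≤ a i := fun i => hj₀ i (Finset.mem_univ i)
  have hS : (Finset.univ.filter (fun i => ∀ i', a i ≤ a i')).Nonempty :=
    ⟨j₀, by simp only [Finset.mem_filter, Finset.mem_univ, true_and]; exact hj₀'⟩
  obtain ⟨j, hjS, hjmax⟩ := Finset.exists_max_image _ α hS
  simp only [Finset.mem_filter, Finset.mem_univ, true_and] at hjS
  refine ⟨j, hjS, lt_of_le_of_lt (hjS i₀) hi₀, fun i hi => ?_⟩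
  exact hjmax i (by simp only [Finset.mem_filter, Finset.mem_univ, true_and]; exact hi)

lemma nextAngles_of_ge (α a : Fin N → ℝ) (h : ∀ i, Real.pi ≤ a i) :
    nextAngles N α a = a := by
  have hnc : ¬ ∃ j, (∀ i, a j ≤ a i) ∧ a j < Real.pi ∧
      (∀ i, (∀ i', a i ≤ a i') → α i ≤ α j) := by
    rintro ⟨j, -, hj, -⟩
    exact absurd hj (not_lt.mpr (h j))
  rw [nextAngles, dif_neg hnc]

lemma nextAngles_spec (α a : Fin N → ℝ) (h : ∃ i, a i < Real.pi) :
    ∃ j, (∀ i, a j ≤ a i) ∧ a j < Real.pi ∧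
      nextAngles N α a = Function.update a j (a j + 2 * α j) := by
  have hc := cond_of α a h
  exact ⟨hc.choose, hc.choose_spec.1, hc.choose_spec.2.1, by rw [nextAngles, dif_pos hc]⟩

lemma angleSeq_stable (α : Fin N → ℝ) (K : ℕ) (h : ∀ i, Real.pi ≤ angleSeq N α K i) :
    ∀ m, angleSeq N α (K + m) = angleSeq N α K := by
  intro m
  induction m with
  | zero => rfl
  | succ m ih =>
    show nextAngles N α (angleSeq N α (K + m)) = _
    rw [ih, nextAngles_of_ge α _ h]

lemma coeff_one (hN : 0 < N) (α : Fin N → ℝ) (k : ℕ) (h : ∀ i, Real.pi ≤ angleSeq N α k i) :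
    coeffSeq N hN α k = 1 := by
  rw [coeffSeq, min_eq_left, Real.sin_pi_div_two]
  exact Finset.le_inf' _ _ fun i _ => h i

lemma ceil_key {x : ℝ} (hx : 0 < x) : ⌈x - 1⌉₊ < ⌈x⌉₊ := by
  have h1 : 1 ≤ ⌈x⌉₊ := Nat.one_le_ceil_iff.mpr hx
  have h2 : ⌈x - 1⌉₊ ≤ ⌈x⌉₊ - 1 := by
    rw [Nat.ceil_le, Nat.cast_sub h1, Nat.cast_one]
    linarith [Nat.le_ceil x]
  omega

lemma mu_dec (α a : Fin N → ℝ) (hα : ∀ i, 0 < α i) (h : ∃ i, a i < Real.pi) :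
    ∑ i, ⌈(Real.pi - nextAngles N α a i) / (2 * α i)⌉₊ <
      ∑ i, ⌈(Real.pi - a i) / (2 * α i)⌉₊ := by
  obtain ⟨j, hjmin, hjπ, hupd⟩ := nextAngles_spec α a h
  have hαj : (0:ℝ) < α j := hα j
  have hne : (2 * α j) ≠ 0 := by positivity
  have heq : (Real.pi - (a j + 2 * α j)) / (2 * α j)
      = (Real.pi - a j) / (2 * α j) - 1 := by
    field_simp
    ring
  have hkey : ⌈(Real.pi - (a j + 2 * α j)) / (2 * α j)⌉₊ < ⌈(Real.pi - a j) / (2 * α j)⌉₊ := by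
    rw [heq]
    exact ceil_key (div_pos (by linarith) (by positivity))
  rw [hupd]
  apply Finset.sum_lt_sum
  · intro i _
    by_cases hij : i = j
    · subst hij
      rw [Function.update_self]
      exact le_of_lt hkey
    · rw [Function.update_of_ne hij]
  · exact ⟨j, Finset.mem_univ j, by rw [Function.update_self]; exact hkey⟩

lemma exists_terminal (hN : 0 < N) (α : Fin N → ℝ) (hα : ∀ i, 0 < α i) :
    ∃ K, ∀ i, Real.pi ≤ angleSeq N α K i := by
  suffices h : ∀ n k, (∑ i, ⌈(Real.pi - angleSeq N α k i) / (2 * α i)⌉₊) ≤ n →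
      ∃ K, ∀ i, Real.pi ≤ angleSeq N α K i from
    h (∑ i, ⌈(Real.pi - angleSeq N α 0 i) / (2 * α i)⌉₊) 0 le_rfl
  intro n
  induction n with
  | zero =>
    intro k hk
    by_cases hp : ∀ i, Real.pi ≤ angleSeq N α k i
    · exact ⟨k, hp⟩
    · push_neg at hp
      obtain ⟨i, hi⟩ := hp
      exfalso
      have h1 : 1 ≤ ⌈(Real.pi - angleSeq N α k i) / (2 * α i)⌉₊ :=
        Nat.one_le_ceil_iff.mpr (div_pos (by linarith) (by have := hα i; positivity))
      have h2 : 1 ≤ ∑ i, ⌈(Real.pi - angleSeq N α k i) / (2 * α i)⌉₊ :=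
        le_trans h1 (Finset.single_le_sum
          (f := fun i => ⌈(Real.pi - angleSeq N α k i) / (2 * α i)⌉₊)
          (fun _ _ => Nat.zero_le _) (Finset.mem_univ i))
      omega
  | succ n ih =>
    intro k hk
    by_cases hp : ∀ i, Real.pi ≤ angleSeq N α k i
    · exact ⟨k, hp⟩
    · push_neg at hp
      have hdec : (∑ i, ⌈(Real.pi - angleSeq N α (k+1) i) / (2 * α i)⌉₊) <
          ∑ i, ⌈(Real.pi - angleSeq N α k i) / (2 * α i)⌉₊ :=
        mu_dec α _ hα hp
      exact ih (k+1) (by omega)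

lemma coeff_eventually_one (hN : 0 < N) (α : Fin N → ℝ) (K : ℕ)
    (hK : ∀ i, Real.pi ≤ angleSeq N α K i) :
    ∀ k ≥ K, coeffSeq N hN α k = 1 := by
  intro k hk
  obtain ⟨m, rfl⟩ := Nat.exists_eq_add_of_le hk
  exact coeff_one hN α _ (by rw [angleSeq_stable α K hK m]; exact hK)

section Regular

variable (hN3 : 3 ≤ N)

lemma regular_inv (hN3 : 3 ≤ N) :
    ∀ k, k ≤ N → ∃ S : Finset (Fin N), S.card = k ∧
      ∀ i, angleSeq N (fun _ => Real.pi * (1 - 2 / (N : ℝ))) k i =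
        if i ∈ S then 3 * (Real.pi * (1 - 2 / (N : ℝ))) else Real.pi * (1 - 2 / (N : ℝ)) := by
  set c := Real.pi * (1 - 2 / (N : ℝ)) with hcdef
  have hNR : (3:ℝ) ≤ (N:ℝ) := by exact_mod_cast hN3
  have hN0 : (0:ℝ) < (N:ℝ) := by linarith
  have h2N : 2 / (N:ℝ) ≤ 2 / 3 := by
    rw [div_le_div_iff₀ hN0 (by norm_num)]; linarith
  have h2N0 : 0 < 2 / (N:ℝ) := by positivity
  have hc0 : 0 < c := mul_pos Real.pi_pos (by linarith)
  have hcπ : c < Real.pi := by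
    have := Real.pi_pos
    nlinarith
  intro k
  induction k with
  | zero =>
    intro _
    exact ⟨∅, Finset.card_empty, fun i => by simp [angleSeq]⟩
  | succ k ih =>
    intro hkN
    obtain ⟨S, hScard, hSval⟩ := ih (by omega)
    have hSne : S ≠ Finset.univ := by
      intro hS
      rw [hS, Finset.card_univ, Fintype.card_fin] at hScard
      omega
    have hcompl : Sᶜ.Nonempty := by
      rw [← Finset.card_pos, Finset.card_compl, hScard, Fintype.card_fin]
      omega
    obtain ⟨i₀, hi₀c⟩ := hcompl
    have hi₀ : i₀ ∉ S := Finset.mem_compl.mp hi₀c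
    set a := angleSeq N (fun _ => c) k with ha
    have hai₀ : a i₀ = c := by rw [hSval i₀, if_neg hi₀]
    have hex : ∃ i, a i < Real.pi := ⟨i₀, by rw [hai₀]; exact hcπ⟩
    obtain ⟨j, hjmin, hjπ, hupd⟩ := nextAngles_spec (fun _ => c) a hex
    have hjS : j ∉ S := by
      intro hjmem
      have h1 := hjmin i₀
      rw [hSval j, hSval i₀, if_pos hjmem, if_neg hi₀] at h1
      linarith
    have haj : a j = c := by rw [hSval j, if_neg hjS]
    refine ⟨insert j S, by rw [Finset.card_insert_of_notMem hjS, hScard], fun i => ?_⟩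
    show nextAngles N (fun _ => c) a i = _
    rw [hupd]
    by_cases hij : i = j
    · subst hij
      rw [Function.update_self, haj, if_pos (Finset.mem_insert_self i S)]
      ring
    · rw [Function.update_of_ne hij, hSval i]
      by_cases hiS : i ∈ S
      · rw [if_pos hiS, if_pos (Finset.mem_insert_of_mem hiS)]
      · rw [if_neg hiS, if_neg (by simp [Finset.mem_insert, hij, hiS])]

end Regular

end EAP

theorem effective_angle_procedure :
    -- (i) regular N-gon with angles α = π(1 - 2/N)
    (∀ N : ℕ, ∀ hN : 3 ≤ N,
      (∀ k < N, coeffSeq N (by omega) (fun _ => Real.pi * (1 - 2 / (N : ℝ))) k =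
        Real.sin (Real.pi * (1 - 2 / (N : ℝ)) / 2)) ∧
      (∀ k ≥ N, coeffSeq N (by omega) (fun _ => Real.pi * (1 - 2 / (N : ℝ))) k = 1)) ∧
    -- (ii) termination for arbitrary polygonal angles in (0, π)
    (∀ N : ℕ, ∀ hN : 0 < N, ∀ α : Fin N → ℝ,
      (∀ i, 0 < α i ∧ α i < Real.pi) →
      ∃ K : ℕ, ∀ k ≥ K, coeffSeq N hN α k = 1) := by
  constructor
  · intro N hN
    have hN0 : 0 < N := by omega
    set c := Real.pi * (1 - 2 / (N : ℝ)) with hcdef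
    have hNR : (3:ℝ) ≤ (N:ℝ) := by exact_mod_cast hN
    have hN0R : (0:ℝ) < (N:ℝ) := by linarith
    have h2N : 2 / (N:ℝ) ≤ 2 / 3 := by
      rw [div_le_div_iff₀ hN0R (by norm_num)]; linarith
    have h2N0 : 0 < 2 / (N:ℝ) := by positivity
    have hc0 : 0 < c := mul_pos Real.pi_pos (by linarith)
    have hcπ : c < Real.pi := by
      have := Real.pi_pos
      nlinarith
    have h3c : Real.pi ≤ 3 * c := by
      have := Real.pi_pos
      nlinarith
    constructor
    · intro k hk
      obtain ⟨S, hScard, hSval⟩ := EAP.regular_inv hN k (by omega)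
      have hcompl : Sᶜ.Nonempty := by
        rw [← Finset.card_pos, Finset.card_compl, hScard, Fintype.card_fin]
        omega
      obtain ⟨i₀, hi₀c⟩ := hcompl
      have hi₀ : i₀ ∉ S := Finset.mem_compl.mp hi₀c
      have hle : ∀ i, c ≤ angleSeq N (fun _ => c) k i := by
        intro i
        rw [hSval i]
        by_cases hiS : i ∈ S
        · rw [if_pos hiS]; linarith
        · rw [if_neg hiS]
      have hinf : Finset.univ.inf'
          (Finset.univ_nonempty_iff.mpr (Fin.pos_iff_nonempty.mp hN0))
          (angleSeq N (fun _ => c) k) = c := by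
        refine le_antisymm ?_ (Finset.le_inf' _ _ fun i _ => hle i)
        refine le_trans (Finset.inf'_le _ (Finset.mem_univ i₀)) ?_
        rw [hSval i₀, if_neg hi₀]
      rw [coeffSeq, hinf, min_eq_right (le_of_lt hcπ)]
    · intro k hk
      obtain ⟨S, hScard, hSval⟩ := EAP.regular_inv hN N le_rfl
      have hSuniv : S = Finset.univ :=
        Finset.eq_univ_of_card S (by rw [hScard, Fintype.card_fin])
      have hge : ∀ i, Real.pi ≤ angleSeq N (fun _ => c) N i := by
        intro i
        rw [hSval i, if_pos (hSuniv ▸ Finset.mem_univ i)]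
        exact h3c
      exact EAP.coeff_eventually_one hN0 (fun _ => c) N hge k hk
  · intro N hN α hα
    obtain ⟨K, hK⟩ := EAP.exists_terminal hN α (fun i => (hα i).1)
    exact ⟨K, EAP.coeff_eventually_one hN α K hK⟩
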